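/- Let A_0 = {a_s(n_s)}_{s=0}^k be an m-cover of ℤ with a_0(n_0) essential, and let m_1,...,m_k be positive integers with gcd(m_s,n_s) = 1 for each s ∈ {1,...,k}. Then there exists α ∈ [0,1) such that for every r ∈ {0,1,...,n_0−1}, the set { ∑_{s∈I} m_s/n_s : I ⊆ {1,...,k} and {∑_{s∈I} m_s/n_s} = (α+r)/n_0 } has cardinality at least m. Consequently, the set { {∑_{s∈I} m_s/n_s} : I ⊆ {1,...,k} and ⌊∑_{s∈I} m_s/n_s⌋ ≥ m−1 } contains an arithmetic progression of length n_0 with common difference 1/n_0. -/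

import Mathlib

/-!
Put `N = n₀ ∏ nₛ`, `dₛ = N mₛ / nₛ`, `d₀ = N / n₀`, `e(y) = exp(2πiy)`, and for `x ∈ ℤ/N` let
`G_x(X) = ∏ₛ (1 - e(mₛ(x - aₛ)/nₛ) X^{dₛ})`. The `s`-th factor vanishes at `X = 1` exactly when
`x ∈ aₛ(nₛ)` (this is where `gcd(mₛ, nₛ) = 1` enters), and then to order one. So the covering
hypothesis says that `(X - 1)^{m-1}` divides every `G_x` and `(X - 1)^m` divides every
`(1 - e((x - a₀)/n₀) X^{d₀}) G_x`, while essentiality of `a₀(n₀)` gives an `x` with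
`(X - 1)^m ∤ G_x`.

Expanding the product, `G_x = ∑_θ e(xθ/N) P_θ`, where `P_θ` collects the terms `X^{∑_{s∈I} dₛ}` with
`∑_{s∈I} dₛ ≡ θ (mod N)`. Fourier inversion on `ℤ/N` transfers the three facts to the `P_θ`:
`(X - 1)^{m-1}` divides every `P_θ`, whether `(X - 1)^m` divides `P_θ` depends only on `θ` modulo
`d₀`, and it fails for some `θ = ρ + q d₀`, hence for all `θ = ρ + r d₀`. A nonzero polynomial
divisible by `(X - 1)^{m-1}` has at least `m` terms, so for each `r` there are at least `m` distinct
sums `∑_{s∈I} mₛ/nₛ = ∑_{s∈I} dₛ / N` with fractional part `(ρ + r d₀)/N = (ρ/d₀ + r)/n₀`; as they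
differ by integers, the largest has integer part at least `m - 1`.
-/

open Polynomial Finset ZMod

theorem AddChar.map_sum_eq_prod {ι A M : Type*} [AddCommMonoid A] [CommMonoid M]
    (ψ : AddChar A M) (s : Finset ι) (f : ι → A) : ψ (∑ i ∈ s, f i) = ∏ i ∈ s, ψ (f i) := by
  classical
  induction s using Finset.induction_on with
  | empty => simp
  | insert i s hi ih => rw [sum_insert hi, prod_insert hi, map_add_eq_mul, ih]

theorem Finset.exists_card_sub_one_le_div_of_forall_mod_eq {S : Finset ℕ} {N r : ℕ}
    (hS : ∀ E ∈ S, E % N = r) (hne : S.Nonempty) : ∃ E ∈ S, #S - 1 ≤ E / N := by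
  by_contra! h
  have hinj : Set.InjOn (· / N) (S : Set ℕ) := fun E hE E' hE' heq => by
    rw [← Nat.div_add_mod E N, ← Nat.div_add_mod E' N, hS E hE, hS E' hE']
    exact congrArg (N * · + r) heq
  have := card_le_card_of_injOn (· / N) (fun E hE => mem_range.2 (h E hE)) hinj
  rw [card_range] at this
  have := hne.card_pos
  omega

namespace Polynomial

theorem rootMultiplicity_prod {R ι : Type*} [CommRing R] [IsDomain R] {s : Finset ι}
    {f : ι → R[X]} (h : ∏ i ∈ s, f i ≠ 0) (a : R) :
    rootMultiplicity a (∏ i ∈ s, f i) = ∑ i ∈ s, rootMultiplicity a (f i) := by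
  classical
  simp only [← count_roots, roots_prod f s h, Multiset.count_bind]
  rfl

variable {K : Type*} [Field K]

theorem isCoprime_X_sub_C_pow_C_mul_X_pow {a c : K} (ha : a ≠ 0) (hc : c ≠ 0) (m d : ℕ) :
    IsCoprime ((X - C a) ^ m) (C c * X ^ d) := by
  have hX : IsCoprime (X - C a) X := by
    simpa using isCoprime_X_sub_C_of_isUnit_sub (a := a) (b := 0) (by simpa using ha.isUnit)
  exact ((isCoprime_mul_unit_left_right (isUnit_C.2 hc.isUnit) _ _).2 hX.pow_right).pow_left

variable [CharZero K]

theorem lt_card_support_of_X_sub_C_pow_dvd {a : K} (ha : a ≠ 0) {t : ℕ} {p : K[X]} (hp : p ≠ 0)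
    (hdvd : (X - C a) ^ t ∣ p) : t < #p.support := by
  induction t generalizing p with
  | zero => exact card_pos.2 (nonempty_support_iff.2 hp)
  | succ t ih =>
    set e := p.natTrailingDegree
    -- `X p' - e p` loses the term of degree `e` but still vanishes to order `t` at `a`
    set q : K[X] := X * derivative p - C (e : K) * p
    have hq_coeff (j : ℕ) : q.coeff j = ((j : K) - e) * p.coeff j := by
      cases j with
      | zero => simp [q, mul_coeff_zero]
      | succ j => simp [q, coeff_derivative, coeff_X_mul]; ring
    have hq_supp : q.support ⊆ p.support.erase e := by
      intro j hj
      rw [mem_support_iff, hq_coeff, mul_ne_zero_iff, sub_ne_zero, ne_eq, Nat.cast_inj] at hj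
      exact mem_erase.2 ⟨hj.1, mem_support_iff.2 hj.2⟩
    have hq_dvd : (X - C a) ^ t ∣ q :=
      dvd_sub ((pow_sub_one_dvd_derivative_of_pow_dvd hdvd).mul_left X)
        (((pow_dvd_pow _ t.le_succ).trans hdvd).mul_left _)
    have he : e ∈ p.support := natTrailingDegree_mem_support_of_nonzero hp
    by_cases hq : q = 0
    · have hmono : p = C (p.coeff e) * X ^ e := by
        ext j
        rw [coeff_C_mul_X_pow]
        split_ifs with hj
        · rw [hj]
        · have := hq_coeff j
          rw [hq, coeff_zero, eq_comm, mul_eq_zero, sub_eq_zero, Nat.cast_inj] at this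
          exact this.resolve_left hj
      have hroot : (X - C a) ∣ p := (dvd_pow_self _ t.succ_ne_zero).trans hdvd
      rw [dvd_iff_isRoot, hmono, IsRoot, eval_mul, eval_C, eval_pow, eval_X] at hroot
      exact absurd (mul_eq_zero.1 hroot) (by simp [mem_support_iff.1 he, ha])
    · calc t + 1 < #q.support + 1 := by simpa using ih hq hq_dvd
        _ ≤ #(p.support.erase e) + 1 := by gcongr
        _ = #p.support := card_erase_add_one he

theorem one_sub_C_mul_X_pow_ne_zero (w : K) {d : ℕ} (hd : d ≠ 0) : 1 - C w * X ^ d ≠ 0 := by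
  intro h
  simpa [hd] using congrArg (eval 0) h

theorem rootMultiplicity_one_one_sub_C_mul_X_pow [DecidableEq K] (w : K) {d : ℕ} (hd : d ≠ 0) :
    rootMultiplicity 1 (1 - C w * X ^ d) = if w = 1 then 1 else 0 := by
  split_ifs with hw
  · have hgeom : (-∑ i ∈ range d, (X : K[X]) ^ i).eval 1 ≠ 0 := by simp [hd]
    have hfac : 1 - C w * X ^ d = (-∑ i ∈ range d, (X : K[X]) ^ i) * (X - C 1) ^ 1 := by
      rw [hw, C_1, one_mul, pow_one, neg_mul, geom_sum_mul, neg_sub]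
    rw [hfac, rootMultiplicity_mul_X_sub_C_pow (fun h => hgeom (by rw [h, eval_zero])),
      rootMultiplicity_eq_zero hgeom]
  · exact rootMultiplicity_eq_zero (by simp [sub_eq_zero, Ne.symm hw])

theorem rootMultiplicity_one_prod_one_sub_C_mul_X_pow {ι : Type*} [Fintype ι] [DecidableEq K]
    (w : ι → K) {d : ι → ℕ} (hd : ∀ i, d i ≠ 0) :
    rootMultiplicity 1 (∏ i, (1 - C (w i) * X ^ d i)) = #{i | w i = 1} := by
  rw [rootMultiplicity_prod (prod_ne_zero_iff.2 fun i _ => one_sub_C_mul_X_pow_ne_zero _ (hd i)),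
    card_filter]
  exact sum_congr rfl fun i _ => rootMultiplicity_one_one_sub_C_mul_X_pow _ (hd i)

end Polynomial

namespace ZMod

variable {N : ℕ} [NeZero N]

theorem dvd_dft_apply {R : Type*} [CommRing R] [Algebra ℂ R] {q : R} {Φ : ZMod N → R}
    (h : ∀ j, q ∣ Φ j) (k : ZMod N) : q ∣ 𝓕 Φ k := by
  rw [dft_apply]
  exact dvd_sum fun j _ => by rw [Algebra.smul_def]; exact (h j).mul_left _

theorem dft_stdAddChar_mul_smul {E : Type*} [AddCommGroup E] [Module ℂ E] (Φ : ZMod N → E)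
    (a k : ZMod N) : 𝓕 (fun j => stdAddChar (j * a) • Φ j) k = 𝓕 Φ (k - a) := by
  simp only [dft_apply, smul_smul, ← AddChar.map_add_eq_mul, mul_sub, neg_sub, neg_add_eq_sub]

theorem stdAddChar_neg_mul_mul_stdAddChar_eq_one_iff {n D : ℕ} {μ : ℤ} (hn : n ≠ 0)
    (hμ : IsCoprime μ n) (hD : (n : ℤ) * D = N * μ) (a y : ℤ) :
    stdAddChar (-(a : ZMod N) * (D : ZMod N)) * stdAddChar ((y : ZMod N) * (D : ZMod N)) = 1 ↔
      (n : ℤ) ∣ y - a := by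
  have hN : (N : ℤ) ≠ 0 := by exact_mod_cast NeZero.ne N
  rw [← AddChar.map_add_eq_mul, ← AddChar.map_zero_eq_one (stdAddChar (N := N)),
    injective_stdAddChar.eq_iff,
    show -(a : ZMod N) * (D : ZMod N) + y * D = (((y - a) * D : ℤ) : ZMod N) by push_cast; ring,
    intCast_zmod_eq_zero_iff_dvd, ← mul_dvd_mul_iff_right (Int.natCast_ne_zero.2 hn), mul_assoc,
    mul_comm (D : ℤ), hD, mul_left_comm, mul_dvd_mul_iff_left hN]
  exact ⟨hμ.symm.dvd_of_dvd_mul_right, fun h => h.mul_right μ⟩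

theorem exists_lt_forall_natCast_add_mul_eq {n₀ d₀ : ℕ} [NeZero (n₀ * d₀)] {α : Type*}
    {f : ZMod (n₀ * d₀) → α} (hf : Function.Periodic f (d₀ : ZMod (n₀ * d₀)))
    (θ : ZMod (n₀ * d₀)) : ∃ ρ < d₀, ∀ r : ℕ, f ((ρ + r * d₀ : ℕ) : ZMod (n₀ * d₀)) = f θ := by
  have hd₀ : d₀ ≠ 0 := right_ne_zero_of_mul (NeZero.ne (n₀ * d₀))
  set q := θ.val / d₀
  set ρ := θ.val % d₀
  have hθ : θ = ((ρ + d₀ * q : ℕ) : ZMod (n₀ * d₀)) := by rw [Nat.mod_add_div, natCast_zmod_val]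
  refine ⟨ρ, Nat.mod_lt _ (Nat.pos_of_ne_zero hd₀), fun r => ?_⟩
  have : ((ρ + r * d₀ : ℕ) : ZMod (n₀ * d₀)) = θ + ((r : ℤ) - q) • (d₀ : ZMod (n₀ * d₀)) := by
    rw [hθ, zsmul_eq_mul]
    push_cast
    ring
  rw [this, hf.zsmul]

end ZMod

section SubsetSums

variable {N : ℕ} {ι : Type*} [Fintype ι] (c : ι → ℂ) (d : ι → ℕ)

-- `P_θ` above
noncomputable def subsetSumPoly (θ : ZMod N) : ℂ[X] :=
  ∑ I : Finset ι with ((∑ s ∈ I, d s : ℕ) : ZMod N) = θ, C (∏ s ∈ I, -c s) * X ^ ∑ s ∈ I, d s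

def subsetSums (θ : ZMod N) : Finset ℕ :=
  ({I : Finset ι | ((∑ s ∈ I, d s : ℕ) : ZMod N) = θ} : Finset _).image fun I => ∑ s ∈ I, d s

theorem support_subsetSumPoly_subset (θ : ZMod N) :
    (subsetSumPoly c d θ).support ⊆ subsetSums d θ := by
  intro j hj
  contrapose! hj
  rw [notMem_support_iff, subsetSumPoly, finsetSum_coeff]
  refine sum_eq_zero fun I hI => ?_
  rw [coeff_C_mul_X_pow, if_neg]
  rintro rfl
  exact hj (mem_image_of_mem _ hI)

variable [NeZero N]

-- `G_x` above when `c s = e(-aₛ dₛ / N)`, since `stdAddChar y = e(y / N)`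
noncomputable def twistedProd (x : ZMod N) : ℂ[X] :=
  ∏ s, (1 - C (c s * stdAddChar (x * (d s : ZMod N))) * X ^ d s)

theorem twistedProd_eq_sum (x : ZMod N) :
    twistedProd c d x = ∑ θ, stdAddChar (x * θ) • subsetSumPoly c d θ := by
  have hI (I : Finset ι) : ∏ s ∈ I, -(C (c s * stdAddChar (x * (d s : ZMod N))) * X ^ d s) =
      stdAddChar (x * ((∑ s ∈ I, d s : ℕ) : ZMod N)) • (C (∏ s ∈ I, -c s) * X ^ ∑ s ∈ I, d s) := by
    rw [Nat.cast_sum, mul_sum, AddChar.map_sum_eq_prod, smul_eq_C_mul, map_prod, map_prod,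
      ← prod_pow_eq_pow_sum, ← prod_mul_distrib, ← prod_mul_distrib]
    refine prod_congr rfl fun s _ => ?_
    rw [C_mul, C_neg]
    ring
  simp_rw [twistedProd, sub_eq_add_neg, add_comm (1 : ℂ[X]), prod_add_one, powerset_univ, hI,
    subsetSumPoly, smul_sum]
  rw [← sum_fiberwise univ (fun I : Finset ι => ((∑ s ∈ I, d s : ℕ) : ZMod N))]
  refine sum_congr rfl fun θ _ => sum_congr rfl fun I hI => ?_
  rw [(mem_filter.1 hI).2]

theorem dft_twistedProd : 𝓕 (twistedProd (N := N) c d) = (N : ℂ) • subsetSumPoly c d := by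
  have : twistedProd (N := N) c d = (N : ℂ) • 𝓕⁻ (subsetSumPoly c d) := by
    ext1 x
    simp only [Pi.smul_apply, invDFT_apply, smul_inv_smul₀ (NeZero.ne (N : ℂ)), twistedProd_eq_sum,
      mul_comm x]
  rw [this, LinearEquiv.map_smul, LinearEquiv.apply_symm_apply]

theorem twistedProd_ne_zero (hd : ∀ s, d s ≠ 0) (x : ZMod N) : twistedProd c d x ≠ 0 :=
  prod_ne_zero_iff.2 fun s _ => one_sub_C_mul_X_pow_ne_zero _ (hd s)

theorem rootMultiplicity_one_twistedProd (hd : ∀ s, d s ≠ 0) (x : ZMod N) :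
    rootMultiplicity 1 (twistedProd c d x) = #{s | c s * stdAddChar (x * (d s : ZMod N)) = 1} :=
  rootMultiplicity_one_prod_one_sub_C_mul_X_pow _ hd

theorem dvd_subsetSumPoly_of_forall_dvd {q : ℂ[X]} (h : ∀ x : ZMod N, q ∣ twistedProd c d x)
    (θ : ZMod N) : q ∣ subsetSumPoly c d θ := by
  have := dvd_dft_apply h θ
  rwa [dft_twistedProd, Pi.smul_apply, smul_eq_C_mul, dvd_C_mul (NeZero.ne _)] at this

theorem exists_not_dvd_subsetSumPoly {q : ℂ[X]} {x : ZMod N} (h : ¬q ∣ twistedProd c d x) :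
    ∃ θ : ZMod N, ¬q ∣ subsetSumPoly c d θ := by
  contrapose! h
  rw [twistedProd_eq_sum]
  exact dvd_sum fun θ _ => by rw [smul_eq_C_mul]; exact (h θ).mul_left _

theorem periodic_dvd_subsetSumPoly {q : ℂ[X]} {c₀ : ℂ} {d₀ : ℕ} (hq : IsCoprime q (C c₀ * X ^ d₀))
    (h : ∀ x : ZMod N,
      q ∣ (1 - C (c₀ * stdAddChar (x * (d₀ : ZMod N))) * X ^ d₀) * twistedProd c d x) :
    Function.Periodic (fun θ => q ∣ subsetSumPoly c d θ) (d₀ : ZMod N) := by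
  intro θ
  have hdft : 𝓕 (fun x => (1 - C (c₀ * stdAddChar (x * (d₀ : ZMod N))) * X ^ d₀) *
      twistedProd c d x) (θ + (d₀ : ZMod N)) = (N : ℂ) •
      (subsetSumPoly c d (θ + (d₀ : ZMod N)) - C c₀ * X ^ d₀ * subsetSumPoly c d θ) := by
    have hsplit : (fun x : ZMod N => (1 - C (c₀ * stdAddChar (x * (d₀ : ZMod N))) * X ^ d₀) *
        twistedProd c d x) = twistedProd c d -
          fun x => C c₀ * X ^ d₀ * (stdAddChar (x * (d₀ : ZMod N)) • twistedProd c d x) := by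
      ext1 x
      simp only [Pi.sub_apply, smul_eq_C_mul, C_mul]
      ring
    rw [hsplit, map_sub, Pi.sub_apply, dft_const_mul]
    beta_reduce
    rw [dft_stdAddChar_mul_smul, add_sub_cancel_right, dft_twistedProd, Pi.smul_apply,
      Pi.smul_apply, smul_sub, mul_smul_comm]
  have hkey : q ∣ subsetSumPoly c d (θ + (d₀ : ZMod N)) - C c₀ * X ^ d₀ * subsetSumPoly c d θ := by
    have := dvd_dft_apply h (θ + (d₀ : ZMod N))
    rwa [hdft, smul_eq_C_mul, dvd_C_mul (NeZero.ne _)] at this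
  simp only [eq_iff_iff, dvd_iff_dvd_of_dvd_sub hkey]
  exact ⟨hq.dvd_of_dvd_mul_left, fun h => h.mul_left _⟩

end SubsetSums

theorem le_card_subsetSums_of_dvd_of_not_dvd {N : ℕ} {ι : Type*} [Fintype ι] {c : ι → ℂ}
    {d : ι → ℕ} {m : ℕ} {θ : ZMod N} (hdvd : (X - C 1) ^ (m - 1) ∣ subsetSumPoly c d θ)
    (hndvd : ¬(X - C 1) ^ m ∣ subsetSumPoly c d θ) : m ≤ #(subsetSums d θ) := by
  have hne : subsetSumPoly c d θ ≠ 0 := fun h => hndvd (h ▸ dvd_zero _)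
  have := (lt_card_support_of_X_sub_C_pow_dvd one_ne_zero hne hdvd).trans_le
    (card_le_card (support_subsetSumPoly_subset c d θ))
  omega

theorem exists_lt_forall_le_card_subsetSums {ι : Type*} [Fintype ι] {n₀ d₀ m : ℕ}
    [NeZero (n₀ * d₀)] (c : ι → ℂ) {d : ι → ℕ} (hd : ∀ s, d s ≠ 0) {c₀ : ℂ} (hc₀ : c₀ ≠ 0)
    (hcover : ∀ x : ZMod (n₀ * d₀), m ≤ #{s | c s * stdAddChar (x * (d s : ZMod (n₀ * d₀))) = 1} +
      if c₀ * stdAddChar (x * (d₀ : ZMod (n₀ * d₀))) = 1 then 1 else 0)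
    (hess : ∃ x : ZMod (n₀ * d₀), #{s | c s * stdAddChar (x * (d s : ZMod (n₀ * d₀))) = 1} < m) :
    ∃ ρ < d₀, ∀ r : ℕ, m ≤ #(subsetSums d ((ρ + r * d₀ : ℕ) : ZMod (n₀ * d₀))) := by
  have hd₀ : d₀ ≠ 0 := right_ne_zero_of_mul (NeZero.ne (n₀ * d₀))
  have hG := rootMultiplicity_one_twistedProd (N := n₀ * d₀) c d hd
  have hG₀ := twistedProd_ne_zero (N := n₀ * d₀) c d hd
  have hdvd : ∀ θ, (X - C 1) ^ (m - 1) ∣ subsetSumPoly c d θ :=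
    dvd_subsetSumPoly_of_forall_dvd c d fun x => by
      rw [← le_rootMultiplicity_iff (hG₀ x), hG]
      have := hcover x
      split_ifs at this <;> omega
  have hdvd₀ (x : ZMod (n₀ * d₀)) : (X - C 1) ^ m ∣
      (1 - C (c₀ * stdAddChar (x * (d₀ : ZMod (n₀ * d₀)))) * X ^ d₀) * twistedProd c d x := by
    have h₀ := one_sub_C_mul_X_pow_ne_zero (c₀ * stdAddChar (x * (d₀ : ZMod (n₀ * d₀)))) hd₀
    rw [← le_rootMultiplicity_iff (mul_ne_zero h₀ (hG₀ x)), rootMultiplicity_mul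
      (mul_ne_zero h₀ (hG₀ x)), rootMultiplicity_one_one_sub_C_mul_X_pow _ hd₀, hG]
    have := hcover x
    split_ifs at this ⊢ <;> omega
  have hper := periodic_dvd_subsetSumPoly c d
    (isCoprime_X_sub_C_pow_C_mul_X_pow one_ne_zero hc₀ m d₀) hdvd₀
  obtain ⟨x, hx⟩ := hess
  obtain ⟨θ, hθ⟩ := exists_not_dvd_subsetSumPoly c d (q := (X - C 1) ^ m) (x := x) (by
    rw [← le_rootMultiplicity_iff (hG₀ x), hG]
    omega)
  obtain ⟨ρ, hρ, horbit⟩ := exists_lt_forall_natCast_add_mul_eq hper θ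
  exact ⟨ρ, hρ, fun r => le_card_subsetSums_of_dvd_of_not_dvd (hdvd _) (by rw [horbit r]; exact hθ)⟩

theorem exists_lt_forall_le_card_subsetSums_of_cover {ι : Type*} [Fintype ι] {n₀ d₀ m : ℕ}
    [NeZero (n₀ * d₀)] {a₀ : ℤ} {a : ι → ℤ} {n : ι → ℕ} (hn : ∀ s, n s ≠ 0) {μ : ι → ℤ}
    (hμ : ∀ s, IsCoprime (μ s) (n s)) {d : ι → ℕ} (hd : ∀ s, d s ≠ 0)
    (hnd : ∀ s, (n s : ℤ) * d s = (n₀ * d₀ : ℕ) * μ s)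
    (hcover : ∀ x : ℤ, m ≤ #{s | (n s : ℤ) ∣ x - a s} + if (n₀ : ℤ) ∣ x - a₀ then 1 else 0)
    (hess : ∃ x : ℤ, #{s | (n s : ℤ) ∣ x - a s} < m) :
    ∃ ρ < d₀, ∀ r : ℕ, m ≤ #(subsetSums d ((ρ + r * d₀ : ℕ) : ZMod (n₀ * d₀))) := by
  have hhit (s) := stdAddChar_neg_mul_mul_stdAddChar_eq_one_iff (hn s) (hμ s) (hnd s) (a s)
  have hhit₀ := stdAddChar_neg_mul_mul_stdAddChar_eq_one_iff (N := n₀ * d₀) (D := d₀)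
    (left_ne_zero_of_mul (NeZero.ne (n₀ * d₀))) isCoprime_one_left (by push_cast; ring) a₀
  refine exists_lt_forall_le_card_subsetSums
    (fun s => stdAddChar (-(a s : ZMod (n₀ * d₀)) * (d s : ZMod (n₀ * d₀)))) hd
    (c₀ := stdAddChar (-(a₀ : ZMod (n₀ * d₀)) * (d₀ : ZMod (n₀ * d₀))))
    (by simp [stdAddChar_apply]) (fun x => ?_) ?_
  · obtain ⟨y, rfl⟩ := intCast_surjective x
    simp only [hhit, hhit₀]
    exact hcover y
  · obtain ⟨y, hy⟩ := hess
    exact ⟨y, by simpa only [hhit] using hy⟩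

theorem fract_natCast_div_eq_iff {N E θ : ℕ} [NeZero N] (hθ : θ < N) :
    Int.fract ((E : ℝ) / N) = θ / N ↔ (E : ZMod N) = θ := by
  rw [Int.fract_div_natCast_eq_div_natCast_mod, div_left_inj' (NeZero.ne _), Nat.cast_inj,
    natCast_eq_natCast_iff', Nat.mod_eq_of_lt hθ]

section SubsetSumsReal

variable {ι : Type*} [Fintype ι] (d : ι → ℕ) {N θ : ℕ} [NeZero N]

theorem ncard_setOf_fract_eq (hθ : θ < N) :
    {t : ℝ | ∃ I : Finset ι, t = ((∑ s ∈ I, d s : ℕ) : ℝ) / N ∧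
      Int.fract (((∑ s ∈ I, d s : ℕ) : ℝ) / N) = θ / N}.ncard = #(subsetSums d (θ : ZMod N)) := by
  have : {t : ℝ | ∃ I : Finset ι, t = ((∑ s ∈ I, d s : ℕ) : ℝ) / N ∧
      Int.fract (((∑ s ∈ I, d s : ℕ) : ℝ) / N) = θ / N} =
      (fun E : ℕ => (E : ℝ) / N) '' subsetSums d (θ : ZMod N) := by
    ext t
    simp only [Set.mem_ofPred_eq, fract_natCast_div_eq_iff hθ, subsetSums, coe_image, coe_filter,
      mem_univ, true_and, Set.mem_image]
    constructor
    · rintro ⟨I, rfl, hI⟩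
      exact ⟨_, ⟨I, hI, rfl⟩, rfl⟩
    · rintro ⟨_, ⟨I, hI, rfl⟩, rfl⟩
      exact ⟨I, rfl, hI⟩
  rw [this, Set.ncard_image_of_injective _ fun E E' h => by
    simpa [div_left_inj' (NeZero.ne (N : ℝ))] using h, Set.ncard_coe_finset]

theorem exists_le_floor_of_le_card_subsetSums (hθ : θ < N) {m : ℕ} (hm : 0 < m)
    (h : m ≤ #(subsetSums d (θ : ZMod N))) : ∃ I : Finset ι,
      (m : ℤ) - 1 ≤ ⌊((∑ s ∈ I, d s : ℕ) : ℝ) / N⌋ ∧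
      Int.fract (((∑ s ∈ I, d s : ℕ) : ℝ) / N) = θ / N := by
  have hmod : ∀ E ∈ subsetSums d (θ : ZMod N), E % N = (θ : ZMod N).val := by
    intro E hE
    obtain ⟨I, hI, rfl⟩ := mem_image.1 hE
    rw [← val_natCast, (mem_filter.1 hI).2]
  obtain ⟨E, hE, hle⟩ := exists_card_sub_one_le_div_of_forall_mod_eq hmod (card_pos.1 (by omega))
  obtain ⟨I, hI, rfl⟩ := mem_image.1 hE
  refine ⟨I, ?_, (fract_natCast_div_eq_iff hθ).2 (mem_filter.1 hI).2⟩
  rw [Int.floor_div_natCast, Int.floor_natCast, ← Int.natCast_div]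
  omega

end SubsetSumsReal

theorem exists_natCast_mul_eq_mul {ι : Type*} {N : ℕ} (hN : N ≠ 0) {n : ι → ℕ}
    (hnN : ∀ s, n s ∣ N) {μ : ι → ℤ} (hμ : ∀ s, 0 < μ s) :
    ∃ d : ι → ℕ, (∀ s, d s ≠ 0) ∧ ∀ s, (n s : ℤ) * d s = N * μ s := by
  have hnd (s) : (n s : ℤ) * (N / n s * (μ s).toNat : ℕ) = N * μ s := by
    rw [Nat.cast_mul, Int.toNat_of_nonneg (hμ s).le, ← mul_assoc, ← Nat.cast_mul,
      Nat.mul_div_cancel' (hnN s)]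
  exact ⟨_, fun s h => by simpa [h, hN, (hμ s).ne'] using hnd s, hnd⟩

theorem sum_div_eq_natCast_sum_div {ι : Type*} {N : ℕ} (hN : N ≠ 0) {n d : ι → ℕ}
    (hn : ∀ s, n s ≠ 0) {μ : ι → ℤ} (hnd : ∀ s, (n s : ℤ) * d s = N * μ s) (I : Finset ι) :
    ∑ s ∈ I, (μ s : ℝ) / n s = ((∑ s ∈ I, d s : ℕ) : ℝ) / N := by
  rw [Nat.cast_sum, sum_div]
  refine sum_congr rfl fun s _ => ?_
  rw [div_eq_div_iff (by exact_mod_cast hn s) (by exact_mod_cast hN)]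
  exact_mod_cast (by linarith [hnd s] : μ s * N = d s * (n s : ℤ))

/-- **Theorem of [S99]** (see Remark 2.1): Let `A₀ = {a_s(n_s)}_{s=0}^k` be an `m`-cover
of `ℤ` with `a₀(n₀)` essential, and let `m₁,…,m_k` be positive integers coprime to
`n₁,…,n_k` respectively.  Then for some `α ∈ [0,1)`, for every `0 ≤ r < n₀` the set
`{∑_{s∈I} m_s/n_s : I ⊆ [1,k], {∑_{s∈I} m_s/n_s} = (α+r)/n₀}` has at least `m` elements;
consequently `{{∑_{s∈I} m_s/n_s} : I ⊆ [1,k], ⌊∑_{s∈I} m_s/n_s⌋ ≥ m-1}` contains an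
arithmetic progression of length `n₀` with common difference `1/n₀`. -/
theorem sun_S99 (k m : ℕ) (a0 : ℤ) (n0 : ℕ) (hn0 : 0 < n0)
    (a : Fin k → ℤ) (n : Fin k → ℕ) (hn : ∀ s, 0 < n s)
    -- `{a_s(n_s)}_{s=0}^k` is an `m`-cover of `ℤ`:
    (hcover : ∀ x : ℤ, m ≤
      (Finset.univ.filter (fun s : Fin k => (n s : ℤ) ∣ x - a s)).card
        + (if (n0 : ℤ) ∣ x - a0 then 1 else 0))
    -- with `a₀(n₀)` essential:
    (hess : ¬ ∀ x : ℤ, m ≤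
      (Finset.univ.filter (fun s : Fin k => (n s : ℤ) ∣ x - a s)).card)
    (mm : Fin k → ℤ) (hpos : ∀ s, 0 < mm s) (hmm : ∀ s, IsCoprime (mm s) (n s : ℤ)) :
    ∃ α : ℝ, 0 ≤ α ∧ α < 1 ∧ ∀ r : ℕ, r < n0 →
      (m ≤ Set.ncard { t : ℝ | ∃ I : Finset (Fin k),
          t = ∑ s ∈ I, (mm s : ℝ) / (n s : ℝ) ∧
          Int.fract (∑ s ∈ I, (mm s : ℝ) / (n s : ℝ)) = (α + r) / (n0 : ℝ) }) ∧
      (∃ I : Finset (Fin k),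
        (m : ℤ) - 1 ≤ ⌊∑ s ∈ I, (mm s : ℝ) / (n s : ℝ)⌋ ∧
        Int.fract (∑ s ∈ I, (mm s : ℝ) / (n s : ℝ)) = (α + r) / (n0 : ℝ)) := by
  simp only [not_forall, not_le] at hess
  have hm : 0 < m := by obtain ⟨x, hx⟩ := hess; omega
  have hd₀ : 0 < ∏ s, n s := prod_pos fun s _ => hn s
  have hN : n0 * ∏ s, n s ≠ 0 := (Nat.mul_pos hn0 hd₀).ne'
  have : NeZero (n0 * ∏ s, n s) := ⟨hN⟩
  obtain ⟨d, hd, hnd⟩ := exists_natCast_mul_eq_mul hN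
    (fun s => (dvd_prod_of_mem n (mem_univ s)).mul_left n0) hpos
  obtain ⟨ρ, hρ, hS⟩ :=
    exists_lt_forall_le_card_subsetSums_of_cover (fun s => (hn s).ne') hmm hd hnd hcover hess
  refine ⟨ρ / (∏ s, n s : ℕ), by positivity,
    (div_lt_one (by exact_mod_cast hd₀)).2 (by exact_mod_cast hρ), fun r hr => ?_⟩
  have hθ : ρ + r * ∏ s, n s < n0 * ∏ s, n s := by nlinarith
  have hα : ((ρ : ℝ) / (∏ s, n s : ℕ) + r) / n0 =
      ((ρ + r * ∏ s, n s : ℕ) : ℝ) / (n0 * ∏ s, n s : ℕ) := by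
    have hP : ((∏ s, n s : ℕ) : ℝ) ≠ 0 := by exact_mod_cast hd₀.ne'
    rw [Nat.cast_mul, Nat.cast_add, Nat.cast_mul]
    field_simp
  simp only [sum_div_eq_natCast_sum_div hN (fun s => (hn s).ne') hnd, hα]
  exact ⟨(ncard_setOf_fract_eq d hθ).symm ▸ hS r,
    exists_le_floor_of_le_card_subsetSums d hθ hm (hS r)⟩
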